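/- arXiv:1205.4608 — 6 statements merged into one kernel-verified Lean document; each statement's English description precedes it below -/
import Mathlib

section
/- Let V be a finite-dimensional complex vector space and let 𝔤 be a complex Lie subalgebra (a linear subspace suffices) of End_ℂ(V). Define the moment map μ : V × V* → 𝔤* by μ(v,f)(A) = f(A v) for A ∈ 𝔤. If there exists v₀ ∈ V whose infinitesimal stabilizer {A ∈ 𝔤 : A v₀ = 0} is the zero subspace (i.e. the action is locally free), then the set of points (v,f) ∈ V × V* at which the Fréchet derivative of μ is a surjective linear map onto 𝔤* is open and dense in V × V* (norm topology on the finite-dimensional space V × V*). -/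
/-! At a point `(v, f)` the derivative of `μ` restricts on `0 × V*` to `g ↦ g ∘ a_v`, the
transpose of the orbit map `a_v : A ↦ A v`, so it is surjective as soon as `a_v` is injective.
Such `v` are dense: for any `v`, the map `a_{v + t v₀} = a_v + t a_{v₀}` is injective except
for the finitely many `t` with `-t` an eigenvalue of `π ∘ a_v`, where `π` is a left inverse of
`a_{v₀}`. Openness holds because surjective operators onto a finite-dimensional space form an
open set and the derivative of the quadratic map `μ` depends continuously on the point. -/

/-- The moment map `μ : V × V* → 𝔤*`, `μ(v,f)(A) = f(Av)`, of a linear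
subspace `𝔤 ⊆ End_ℂ(V)` acting on a finite-dimensional complex vector
space `V`. -/
noncomputable def linearMomentMap (V : Type*) [NormedAddCommGroup V] [NormedSpace ℂ V]
    [FiniteDimensional ℂ V] (𝔤 : Submodule ℂ (V →L[ℂ] V))
    (p : V × StrongDual ℂ V) : StrongDual ℂ 𝔤 :=
  LinearMap.toContinuousLinearMap
    { toFun := fun A : 𝔤 => p.2 ((A : V →L[ℂ] V) p.1)
      map_add' := by intro A B; simp
      map_smul' := by intro c A; simp }

open Function

theorem LinearMap.finite_setOf_not_injective_add_smul {K E F : Type*} [Field K]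
    [AddCommGroup E] [Module K E] [FiniteDimensional K E] [AddCommGroup F] [Module K F]
    (S T : E →ₗ[K] F) (hT : Injective T) :
    {t : K | ¬ Injective (S + t • T)}.Finite := by
  obtain ⟨π, hπ⟩ := T.exists_leftInverse_of_injective (LinearMap.ker_eq_bot.mpr hT)
  -- a kernel vector of `S + t • T` is a `(-t)`-eigenvector of `π ∘ S`
  refine ((Module.End.finite_hasEigenvalue (π ∘ₗ S)).preimage neg_injective.injOn).subset
    fun t ht => ?_
  obtain ⟨x, hx, hx0⟩ : ∃ x, (S + t • T) x = 0 ∧ x ≠ 0 := by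
    simpa [injective_iff_map_eq_zero] using ht
  have hπT : π (T x) = x := LinearMap.congr_fun hπ x
  have hπS : π (S x) = -t • x := by
    have := congrArg π hx
    simp only [add_apply, smul_apply, map_add, map_smul, hπT, map_zero] at this
    rw [neg_smul]
    exact eq_neg_of_add_eq_zero_left this
  exact Module.End.hasEigenvalue_of_hasEigenvector ⟨Module.End.mem_eigenspace_iff.mpr hπS, hx0⟩

theorem LinearMap.dense_setOf_injective_of_injective {𝕜 V E F : Type*}
    [NontriviallyNormedField 𝕜] [CompleteSpace 𝕜] [AddCommGroup V] [Module 𝕜 V]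
    [TopologicalSpace V] [ContinuousAdd V] [ContinuousSMul 𝕜 V] [AddCommGroup E] [Module 𝕜 E]
    [FiniteDimensional 𝕜 E] [AddCommGroup F] [Module 𝕜 F]
    (Φ : V →ₗ[𝕜] E →ₗ[𝕜] F) {v₀ : V} (hv₀ : Injective (Φ v₀)) :
    Dense {v | Injective (Φ v)} := by
  intro v
  have hgood : Dense {t : 𝕜 | ¬ Injective (Φ v + t • Φ v₀)}ᶜ :=
    ((Φ v).finite_setOf_not_injective_add_smul (Φ v₀) hv₀).countable.dense_compl 𝕜
  simpa using map_mem_closure (f := fun t : 𝕜 => v + t • v₀) (by fun_prop) (hgood 0)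
    fun t ht => by simpa using ht

theorem ContinuousLinearMap.isOpen_setOf_surjective {𝕜 E F : Type*}
    [NontriviallyNormedField 𝕜] [CompleteSpace 𝕜] [NormedAddCommGroup E] [NormedSpace 𝕜 E]
    [NormedAddCommGroup F] [NormedSpace 𝕜 F] [FiniteDimensional 𝕜 F] :
    IsOpen {L : E →L[𝕜] F | Surjective L} := by
  have := FiniteDimensional.complete 𝕜 F
  refine isOpen_iff_mem_nhds.mpr fun L₀ hL₀ => ?_
  obtain ⟨σ, hσ⟩ := (L₀ : E →ₗ[𝕜] F).exists_rightInverse_of_surjective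
    (LinearMap.range_eq_top.mpr hL₀)
  let σL : F →L[𝕜] E := LinearMap.toContinuousLinearMap σ
  -- `L ∘ σ` is invertible near `L₀`, and then `L` is surjective
  have hcomp : Continuous fun L : E →L[𝕜] F => L.comp σL :=
    ((ContinuousLinearMap.compL 𝕜 F E F).flip σL).continuous
  have hunit : IsUnit (L₀.comp σL) := by
    convert isUnit_one (M := F →L[𝕜] F)
    ext y
    exact LinearMap.congr_fun hσ y
  refine Filter.mem_of_superset ((Units.isOpen.preimage hcomp).mem_nhds hunit) ?_
  rintro L ⟨u, hu : (u : F →L[𝕜] F) = L.comp σL⟩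
  refine Surjective.of_comp (g := σL) fun y => ⟨(↑u⁻¹ : F →L[𝕜] F) y, ?_⟩
  change (L.comp σL) _ = y
  rw [← hu]
  exact DFunLike.congr_fun u.mul_inv y

section MomentMap

variable {V : Type*} [NormedAddCommGroup V] [NormedSpace ℂ V] (𝔤 : Submodule ℂ (V →L[ℂ] V))

-- Instance search does not find the generic `Submodule` norm instances on `StrongDual ℂ 𝔤`.
noncomputable instance : NormedAddCommGroup 𝔤 := Submodule.normedAddCommGroup 𝔤

noncomputable instance : NormedSpace ℂ 𝔤 := Submodule.normedSpace 𝔤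

noncomputable def orbitMap : V →ₗ[ℂ] 𝔤 →ₗ[ℂ] V :=
  LinearMap.mk₂ ℂ (fun v (A : 𝔤) => (A : V →L[ℂ] V) v) (by simp) (by simp) (by simp) (by simp)

@[simp] theorem orbitMap_apply (v : V) (A : 𝔤) : orbitMap 𝔤 v A = (A : V →L[ℂ] V) v := rfl

variable [FiniteDimensional ℂ V]

@[simp] theorem linearMomentMap_apply (p : V × StrongDual ℂ V) (A : 𝔤) :
    linearMomentMap V 𝔤 p A = p.2 ((A : V →L[ℂ] V) p.1) := rfl

theorem isBoundedBilinearMap_linearMomentMap :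
    IsBoundedBilinearMap ℂ (linearMomentMap V 𝔤) where
  add_left _ _ _ := by ext; simp
  smul_left _ _ _ := by ext; simp
  add_right _ _ _ := by ext; simp
  smul_right _ _ _ := by ext; simp
  bound := by
    refine ⟨1, one_pos, fun v f => ContinuousLinearMap.opNorm_le_bound _ (by positivity)
      fun A => ?_⟩
    calc ‖f ((A : V →L[ℂ] V) v)‖ ≤ ‖f‖ * (‖(A : V →L[ℂ] V)‖ * ‖v‖) :=
          f.le_of_opNorm_le_of_le le_rfl ((A : V →L[ℂ] V).le_opNorm v)
      _ = 1 * ‖v‖ * ‖f‖ * ‖A‖ := by rw [Submodule.coe_norm]; ring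

theorem surjective_fderiv_linearMomentMap {p : V × StrongDual ℂ V}
    (hp : Injective (orbitMap 𝔤 p.1)) :
    Surjective (fderiv ℂ (linearMomentMap V 𝔤) p) := by
  intro φ
  obtain ⟨g, hg⟩ := LinearMap.dualMap_surjective_of_injective hp (φ : 𝔤 →ₗ[ℂ] ℂ)
  refine ⟨(0, LinearMap.toContinuousLinearMap g), ?_⟩
  rw [(isBoundedBilinearMap_linearMomentMap 𝔤).fderiv]
  ext A
  simpa using LinearMap.congr_fun hg A

end MomentMap

/-- Lemma 2.1(1): if some `v₀ ∈ V` has zero infinitesimal stabilizer in `𝔤`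
(the action is locally free), then the set of points where the derivative of
the moment map `μ` is surjective onto `𝔤*` is open and dense in `V × V*`. -/
theorem momentMap_surjective_deriv_openDense (V : Type*) [NormedAddCommGroup V]
    [NormedSpace ℂ V] [FiniteDimensional ℂ V] (𝔤 : Submodule ℂ (V →L[ℂ] V))
    (hfree : ∃ v₀ : V, ∀ A : 𝔤, (A : V →L[ℂ] V) v₀ = 0 → A = 0) :
    IsOpen { p : V × StrongDual ℂ V |
        Function.Surjective (fderiv ℂ (linearMomentMap V 𝔤) p) } ∧
    Dense { p : V × StrongDual ℂ V |
        Function.Surjective (fderiv ℂ (linearMomentMap V 𝔤) p) } := by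
  obtain ⟨v₀, hv₀⟩ := hfree
  have hcont : Continuous (fderiv ℂ (linearMomentMap V 𝔤)) :=
    ((isBoundedBilinearMap_linearMomentMap 𝔤).contDiff (n := 1)).continuous_fderiv one_ne_zero
  have hdense : Dense {v | Injective (orbitMap 𝔤 v)} :=
    (orbitMap 𝔤).dense_setOf_injective_of_injective ((injective_iff_map_eq_zero _).mpr hv₀)
  exact ⟨ContinuousLinearMap.isOpen_setOf_surjective.preimage hcont,
    (hdense.prod dense_univ).mono fun p hp => surjective_fderiv_linearMomentMap 𝔤 hp.1⟩
end

section
/- Let n, N ≥ 1 and let α : Fin N → ℤⁿ be a family of weights which generates ℤⁿ as an additive group (so the corresponding torus representation is faithful), and such that the zero vector of ℝⁿ lies in the intrinsic (relative) interior of the convex hull of {α₁, …, α_N} in ℝⁿ (so the representation is stable). Then the n polynomials μ_j = Σ_{i=1}^{N} α_i(j)·X_i·Y_i, j = 1, …, n, form a regular sequence in the polynomial ring ℂ[X₁, …, X_N, Y₁, …, Y_N]. -/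
/-!
The `j`-th component of the moment map is the image of the linear form
`ℓ_j = ∑ i, α_i(j) z_i` under the substitution `z_i ↦ X_i Y_i`. Since the weights generate `ℤⁿ`,
the forms `ℓ_j` are linearly independent, so after a linear change of coordinates they are
distinct variables of `ℂ[z]`, hence a regular sequence. The substitution makes `ℂ[X, Y]` a free
`ℂ[z]`-module, with basis the monomials `X^a Y^b` for `a, b` of disjoint supports, and weakly
regular sequences survive flat base change. Finally, all `μ_j` vanish at the origin, so they
generate a proper ideal.
-/

open MvPolynomial RingTheory.Sequence Pointwise

namespace RingTheory.Sequence

theorem IsWeaklyRegular.isRegular_of_forall_mem {R : Type*} [CommRing R] {rs : List R}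
    (h : IsWeaklyRegular R rs) {I : Ideal R} (hI : I ≠ ⊤) (hrs : ∀ r ∈ rs, r ∈ I) :
    IsRegular R rs := by
  refine ⟨h, fun htop => hI (eq_top_iff.mpr ?_)⟩
  rw [htop, smul_eq_mul, Ideal.mul_top]
  exact Ideal.span_le.mpr hrs

theorem IsWeaklyRegular.map_ringEquiv {R S : Type*} [CommRing R] [CommRing S] (e : R ≃+* S)
    {rs : List R} (h : IsWeaklyRegular R rs) : IsWeaklyRegular S (rs.map e) :=
  (e.toAddEquiv.isWeaklyRegular_congr <| List.forall₂_map_right_iff.mpr <|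
    List.forall₂_same.mpr fun r _ x => map_mul e r x).mp h

theorem isWeaklyRegular_cons_of_ker_eq_span {R S : Type*} [CommRing R] [CommRing S]
    {f : R →+* S} (hf : Function.Surjective f) {r : R} (hker : RingHom.ker f = Ideal.span {r})
    (hr : IsSMulRegular R r) {rs : List R} (h : IsWeaklyRegular S (rs.map f)) :
    IsWeaklyRegular R (r :: rs) := by
  have hsmul : r • (⊤ : Submodule R R) = RingHom.ker f := by
    rw [hker, ← Submodule.ideal_span_singleton_smul, smul_eq_mul, Ideal.mul_top]
  let e : QuotSMulTop r R ≃+ S :=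
    (Submodule.quotEquivOfEq _ _ hsmul).toAddEquiv.trans
      (RingHom.quotientKerEquivOfSurjective hf).toAddEquiv
  refine (isWeaklyRegular_cons_iff R r rs).mpr ⟨hr, (e.isWeaklyRegular_congr ?_).mpr h⟩
  refine List.forall₂_map_right_iff.mpr (List.forall₂_same.mpr fun a _ x => ?_)
  obtain ⟨y, rfl⟩ := Submodule.Quotient.mk_surjective _ x
  exact map_mul f a y

end RingTheory.Sequence

theorem RingHom.Flat.isWeaklyRegular_map {R S : Type*} [CommRing R] [CommRing S] {f : R →+* S}
    (hf : f.Flat) {rs : List R} (h : IsWeaklyRegular R rs) : IsWeaklyRegular S (rs.map f) := by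
  algebraize [f]
  exact h.of_flat

theorem linearIndependent_intCast_transpose_of_closure_eq_top {ι κ R : Type*} [Fintype κ]
    [DecidableEq κ] [Ring R] (α : ι → κ → ℤ) (hα : AddSubgroup.closure (Set.range α) = ⊤) :
    LinearIndependent R fun j i => (α i j : R) := by
  refine Fintype.linearIndependent_iff.mpr fun g hg j => ?_
  let F : (κ → ℤ) →+ R :=
    { toFun := fun w => ∑ k, g k * w k
      map_zero' := by simp
      map_add' := fun w w' => by simp [mul_add, Finset.sum_add_distrib] }
  have hF : F = 0 := AddMonoidHom.eq_of_eqOn_dense hα <| by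
    rintro _ ⟨i, rfl⟩
    simpa [F, Finset.sum_apply] using congrFun hg i
  simpa [F, Pi.single_apply] using DFunLike.congr_fun hF (Pi.single j 1)

theorem Module.Free.of_basis_smul_eq_basis {R A B ι κ κ' : Type*} [CommSemiring R] [Semiring A]
    [Algebra R A] [AddCommMonoid B] [Module R B] [Module A B] [IsScalarTower R A B]
    (b : Basis κ R A) (c : Basis κ' R B) (m : ι → B) (e : ι × κ ≃ κ')
    (h : ∀ i k, b k • m i = c (e (i, k))) : Module.Free A B := by
  have hm : (Finsupp.linearCombination A m).restrictScalars R =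
      ((Finsupp.basis fun _ : ι => b).equiv c ((Equiv.sigmaEquivProd ι κ).trans e)).toLinearMap :=
    (Finsupp.basis fun _ : ι => b).ext fun ⟨i, k⟩ => by
      rw [LinearEquiv.coe_coe, Basis.equiv_apply]
      simp [h]
  refine .of_equiv (LinearEquiv.ofBijective (Finsupp.linearCombination A m) ?_)
  rw [← LinearMap.coe_restrictScalars R, hm]
  exact LinearEquiv.bijective _

noncomputable def Finsupp.disjointProdEquiv (σ : Type*) :
    {p : (σ →₀ ℕ) × (σ →₀ ℕ) // p.1 ⊓ p.2 = 0} × (σ →₀ ℕ) ≃ (σ →₀ ℕ) × (σ →₀ ℕ) where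
  toFun x := (x.1.1.1 + x.2, x.1.1.2 + x.2)
  invFun p := (⟨(p.1 - p.1 ⊓ p.2, p.2 - p.1 ⊓ p.2), by
      ext i
      simp only [inf_apply, coe_tsub, Pi.sub_apply, coe_zero, Pi.zero_apply]
      omega⟩, p.1 ⊓ p.2)
  left_inv := by
    rintro ⟨⟨⟨a, b⟩, hab⟩, c⟩
    have hc : (a + c) ⊓ (b + c) = c := by
      ext i
      simpa [Nat.add_min_add_right] using DFunLike.congr_fun hab i
    ext i <;> simp [hc]
  right_inv p := by ext i <;> simp

namespace MvPolynomial

section EvalVarZero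

variable {R σ : Type*} [CommRing R] [DecidableEq σ]

variable (R) in
noncomputable def optionEquivVar (t : σ) :
    MvPolynomial σ R ≃ₐ[R] Polynomial (MvPolynomial {s // s ≠ t} R) :=
  (renameEquiv R (Equiv.optionSubtypeNe t).symm).trans (optionEquivLeft R _)

variable (R) in
noncomputable def evalVarZero (t : σ) : MvPolynomial σ R →+* MvPolynomial {s // s ≠ t} R :=
  (Polynomial.evalRingHom 0).comp (optionEquivVar R t).toRingHom

theorem optionEquivVar_X_self (t : σ) : optionEquivVar R t (X t) = Polynomial.X := by
  simp [optionEquivVar, optionEquivLeft_X_none]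

theorem evalVarZero_X_ne {t s : σ} (h : s ≠ t) : evalVarZero R t (X s) = X ⟨s, h⟩ := by
  simp [evalVarZero, optionEquivVar, Equiv.optionSubtypeNe_symm_of_ne h, optionEquivLeft_X_some]

theorem evalVarZero_surjective (t : σ) : Function.Surjective (evalVarZero R t) :=
  fun p => ⟨(optionEquivVar R t).symm (Polynomial.C p), by simp [evalVarZero]⟩

theorem ker_evalVarZero (t : σ) : RingHom.ker (evalVarZero R t) = Ideal.span {X t} := by
  have hX : (optionEquivVar R t).symm Polynomial.X = X t := by
    rw [AlgEquiv.symm_apply_eq, optionEquivVar_X_self]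
  rw [evalVarZero, ← RingHom.comap_ker, Polynomial.ker_evalRingHom, map_zero, sub_zero]
  refine (Ideal.map_comap_of_equiv (optionEquivVar R t).toRingEquiv.symm).symm.trans ?_
  rw [Ideal.map_span, Set.image_singleton]
  exact congrArg (fun p => Ideal.span {p}) hX

end EvalVarZero

theorem isWeaklyRegular_ofFn_X {R σ : Type*} [CommRing R] {m : ℕ} (f : Fin m → σ)
    (hf : Function.Injective f) :
    IsWeaklyRegular (MvPolynomial σ R) (List.ofFn fun j => (X (f j) : MvPolynomial σ R)) := by
  classical
  induction m generalizing σ with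
  | zero => simp
  | succ m ih =>
    have hne (j : Fin m) : f j.succ ≠ f 0 := hf.ne (Fin.succ_ne_zero j)
    rw [List.ofFn_succ]
    refine isWeaklyRegular_cons_of_ker_eq_span (evalVarZero_surjective (f 0))
      (ker_evalVarZero (f 0)) (isRegular_X (R := R) (n := f 0)).left ?_
    have hmap : (List.ofFn fun j : Fin m => (X (f j.succ) : MvPolynomial σ R)).map
        (evalVarZero R (f 0)) = List.ofFn fun j => X ⟨f j.succ, hne j⟩ := by
      rw [List.map_ofFn]
      congr 1
      funext j
      exact evalVarZero_X_ne (hne j)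
    rw [hmap]
    exact ih _ fun a b hab => Fin.succ_injective _ (hf (congrArg Subtype.val hab))

theorem equivMvPolynomial_basisFun_ι {K σ : Type*} [CommRing K] [Fintype σ] [DecidableEq σ]
    (v : σ → K) :
    SymmetricAlgebra.equivMvPolynomial (Pi.basisFun K σ) (SymmetricAlgebra.ι K _ v) =
      ∑ i, C (v i) * X i := by
  conv_lhs => rw [← (Pi.basisFun K σ).sum_repr v]
  simp only [map_sum, map_smul, Pi.basisFun_repr, SymmetricAlgebra.equivMvPolynomial_ι_apply,
    smul_eq_C_mul]

theorem isWeaklyRegular_ofFn_sum_C_mul_X {K σ : Type*} [Field K] [Fintype σ] {n : ℕ}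
    (v : Fin n → σ → K) (hv : LinearIndependent K v) :
    IsWeaklyRegular (MvPolynomial σ K) (List.ofFn fun j => ∑ i, C (v j i) * X i) := by
  classical
  let b := Module.Basis.extend hv.linearIndepOn_id
  let φ : MvPolynomial _ K ≃ₐ[K] MvPolynomial σ K :=
    (SymmetricAlgebra.equivMvPolynomial b).symm.trans
      (SymmetricAlgebra.equivMvPolynomial (Pi.basisFun K σ))
  let f : Fin n → hv.linearIndepOn_id.extend (Set.subset_univ _) :=
    fun j => ⟨v j, hv.linearIndepOn_id.subset_extend _ (Set.mem_range_self j)⟩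
  have hf : Function.Injective f := fun a b hab => hv.injective (congrArg Subtype.val hab)
  have hφ : (List.ofFn fun j => (X (f j) : MvPolynomial _ K)).map φ.toRingEquiv =
      List.ofFn fun j => ∑ i, C (v j i) * X i := by
    rw [List.map_ofFn]
    congr 1
    funext j
    simp [φ, SymmetricAlgebra.equivMvPolynomial_symm_X, b, Module.Basis.extend_apply_self, f,
      equivMvPolynomial_basisFun_ι]
  rw [← hφ]
  exact (isWeaklyRegular_ofFn_X f hf).map_ringEquiv φ.toRingEquiv

variable (σ R : Type*) [CommRing R]

noncomputable def mulPairs : MvPolynomial σ R →ₐ[R] MvPolynomial (σ ⊕ σ) R :=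
  aeval fun i => X (.inl i) * X (.inr i)

variable {σ R}

theorem mulPairs_monomial_one (c : σ →₀ ℕ) :
    mulPairs σ R (monomial c 1) = monomial (c.sumElim c) 1 := by
  simp only [mulPairs, monomial_eq, C_1, one_mul, map_finsuppProd, map_pow, aeval_X, mul_pow,
    Finsupp.prod_mul, Finsupp.prod_sumElim, Function.comp_def]

theorem mulPairs_flat : (mulPairs σ R : MvPolynomial σ R →+* MvPolynomial (σ ⊕ σ) R).Flat := by
  let _ := (mulPairs σ R : MvPolynomial σ R →+* MvPolynomial (σ ⊕ σ) R).toAlgebra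
  have : IsScalarTower R (MvPolynomial σ R) (MvPolynomial (σ ⊕ σ) R) :=
    .of_algebraMap_eq fun r => ((mulPairs σ R).commutes r).symm
  have : Module.Free (MvPolynomial σ R) (MvPolynomial (σ ⊕ σ) R) :=
    .of_basis_smul_eq_basis (basisMonomials σ R) (basisMonomials (σ ⊕ σ) R)
      (fun p => monomial (p.1.1.sumElim p.1.2) 1)
      ((Finsupp.disjointProdEquiv σ).trans Finsupp.sumFinsuppEquivProdFinsupp.symm)
      fun p c => by
        rw [Algebra.smul_def]
        simp [RingHom.algebraMap_toAlgebra, mulPairs_monomial_one, Finsupp.disjointProdEquiv,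
          Finsupp.sumElim_add, add_comm]
  exact Module.Flat.of_free

end MvPolynomial

theorem torus_moment_components_isRegular_general
    (n N : ℕ)
    (α : Fin N → (Fin n → ℤ))
    (hfaithful : AddSubgroup.closure (Set.range α) = (⊤ : AddSubgroup (Fin n → ℤ))) :
    RingTheory.Sequence.IsRegular (MvPolynomial (Fin N ⊕ Fin N) ℂ)
      (List.ofFn fun j : Fin n =>
        (∑ i : Fin N, C (α i j : ℂ) * X (Sum.inl i) * X (Sum.inr i) :
          MvPolynomial (Fin N ⊕ Fin N) ℂ)) := by
  have hv := linearIndependent_intCast_transpose_of_closure_eq_top (R := ℂ) α hfaithful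
  have hreg := mulPairs_flat.isWeaklyRegular_map (isWeaklyRegular_ofFn_sum_C_mul_X _ hv)
  have hμ : (List.ofFn fun j => ∑ i, C (α i j : ℂ) * X i).map
      (mulPairs (Fin N) ℂ : MvPolynomial (Fin N) ℂ →+* _) =
      List.ofFn fun j => ∑ i, C (α i j : ℂ) * X (Sum.inl i) * X (Sum.inr i) := by
    simp [List.map_ofFn, Function.comp_def, mulPairs, mul_assoc]
  rw [hμ] at hreg
  exact hreg.isRegular_of_forall_mem (RingHom.ker_ne_top constantCoeff) <| by
    simp [List.mem_ofFn, RingHom.mem_ker]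

/-- Theorem 3.2 combined with Lemma 2.1(2)/Theorem 2.2(2): for a faithful
stable torus module (weights `α` generate `ℤⁿ` and `0` lies in the relative
interior of the convex hull of the weights), the components
`μ_j = Σ_i α_i(j)·X_i·Y_i` of the complexified moment map form a regular
sequence in `ℂ[X₁,…,X_N,Y₁,…,Y_N]`. -/
theorem torus_moment_components_isRegular
    (n N : ℕ) (hn : 1 ≤ n) (hN : 1 ≤ N)
    (α : Fin N → (Fin n → ℤ))
    (hfaithful : AddSubgroup.closure (Set.range α) = (⊤ : AddSubgroup (Fin n → ℤ)))
    (hstable : (0 : EuclideanSpace ℝ (Fin n)) ∈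
      intrinsicInterior ℝ (convexHull ℝ
        (Set.range fun i => (WithLp.toLp 2 (fun j => (α i j : ℝ)) : EuclideanSpace ℝ (Fin n))))) :
    RingTheory.Sequence.IsRegular (MvPolynomial (Fin N ⊕ Fin N) ℂ)
      (List.ofFn fun j : Fin n =>
        (∑ i : Fin N, C (α i j : ℂ) * X (Sum.inl i) * X (Sum.inr i) :
          MvPolynomial (Fin N ⊕ Fin N) ℂ)) :=
  torus_moment_components_isRegular_general n N α hfaithful
end

section
/- Let n, N ≥ 1 and let α : Fin N → ℤⁿ be a family of weights which generates ℤⁿ as an additive group, and such that the zero vector of ℝⁿ lies in the intrinsic (relative) interior of the convex hull of {α₁, …, α_N} in ℝⁿ. Then the ideal of ℂ[X₁, …, X_N, Y₁, …, Y_N] generated by the n polynomials μ_j = Σ_{i=1}^{N} α_i(j)·X_i·Y_i, j = 1, …, n, is a prime ideal. -/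
/-
Since `0` lies in the relative interior of the convex hull of the weights, there is a relation
`∑ tᵢ αᵢ = 0` with all `tᵢ > 0`. With `zᵢ = xᵢ yᵢ`, the `μ_j` are the images of the linear forms
`ℓ_j = ∑ᵢ αᵢ(j) zᵢ`, and linear forms generate a prime ideal `I` of `ℂ[z]`. The point `t` is a zero
of `I` with no vanishing coordinate, so no `zᵢ` lies in `I`: each `zᵢ` is a nonzerodivisor in the
domain `ℂ[z]/I`. Now send `xᵢ ↦ zᵢ·eᵢ` and `yᵢ ↦ e₋ᵢ` into the Laurent ring `(ℂ[z]/I)[ℤᴺ]`, a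
domain. For the grading `deg xᵢ = eᵢ`, `deg yᵢ = -eᵢ`, the piece of degree `d` of `ℂ[x, y]` is
`x^{d⁺} y^{d⁻} · ℂ[z]`, mapped onto `z^{d⁺} · (ℂ[z]/I) · e_d`. As `z^{d⁺}` is a nonzerodivisor,
the kernel is generated by `I`, i.e. by the `μ_j`, and it is prime.
-/

open Set Filter Topology

section IntrinsicInterior

variable {E : Type*} [AddCommGroup E] [Module ℝ E] [TopologicalSpace E] [ContinuousSMul ℝ E]

theorem exists_neg_smul_mem_of_zero_mem_intrinsicInterior {s : Set E}
    (hs : 0 ∈ intrinsicInterior ℝ s) {v : E} (hv : v ∈ affineSpan ℝ s) :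
    ∃ δ : ℝ, δ < 0 ∧ δ • v ∈ s := by
  obtain ⟨y, hy, hy0⟩ := mem_intrinsicInterior.mp hs
  have h0 : (0 : E) ∈ affineSpan ℝ s := hy0 ▸ y.2
  let line : ℝ → affineSpan ℝ s := fun δ =>
    ⟨δ • v, by simpa using (affineSpan ℝ s).smul_vsub_vadd_mem δ hv h0 h0⟩
  have hline : Continuous line := (continuous_id.smul continuous_const).subtype_mk _
  have hline0 : line 0 = y := Subtype.ext (by simp [line, hy0])
  have hnear : ∀ᶠ δ in 𝓝 0, line δ ∈ interior (((↑) : affineSpan ℝ s → E) ⁻¹' s) :=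
    hline.continuousAt.preimage_mem_nhds (isOpen_interior.mem_nhds (hline0 ▸ hy))
  obtain ⟨δ, hδs, hδ⟩ :=
    ((hnear.filter_mono (nhdsWithin_le_nhds (s := Iio 0))).and self_mem_nhdsWithin).exists
  exact ⟨δ, hδ, interior_subset (s := ((↑) : affineSpan ℝ s → E) ⁻¹' s) hδs⟩

theorem exists_pos_sum_smul_eq_zero_of_zero_mem_intrinsicInterior {ι : Type*} [Fintype ι]
    (f : ι → E) (hf : 0 ∈ intrinsicInterior ℝ (convexHull ℝ (range f))) :
    ∃ t : ι → ℝ, (∀ i, 0 < t i) ∧ ∑ i, t i • f i = 0 := by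
  have h0 : (0 : E) ∈ affineSpan ℝ (range f) := by
    rw [← affineSpan_convexHull]
    exact subset_affineSpan ℝ _ (intrinsicInterior_subset hf)
  have hsum : ∑ i, f i ∈ affineSpan ℝ (convexHull ℝ (range f)) := by
    rw [affineSpan_convexHull]
    have hdir : ∀ i, f i ∈ (affineSpan ℝ (range f)).direction := fun i => by
      simpa using AffineSubspace.vsub_mem_direction (subset_affineSpan ℝ _ (mem_range_self i)) h0
    simpa using AffineSubspace.vadd_mem_of_mem_direction
      (Submodule.sum_mem _ fun i _ => hdir i) h0
  -- `δ • ∑ fᵢ` with `δ < 0` is a nonnegative combination `∑ cᵢ fᵢ`, so `∑ (cᵢ - δ) fᵢ = 0`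
  obtain ⟨δ, hδ, hδmem⟩ := exists_neg_smul_mem_of_zero_mem_intrinsicInterior hf hsum
  have hcone : δ • ∑ i, f i ∈ PointedCone.hull ℝ (range f) :=
    convexHull_min PointedCone.subset_hull (PointedCone.convex _) hδmem
  obtain ⟨c, hc⟩ := (Submodule.mem_span_range_iff_exists_fun _).mp hcone
  have hc' : ∑ i, (c i : ℝ) • f i = δ • ∑ i, f i := hc
  refine ⟨fun i => c i - δ, fun i => by have := (c i).2; linarith, ?_⟩
  simp only [sub_smul, Finset.sum_sub_distrib, hc', Finset.smul_sum, sub_self]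

end IntrinsicInterior

theorem pow_mul_pow_eq_pow_sub_mul_pow_sub_mul_pow_min {M : Type*} [CommMonoid M] (x y : M)
    (a b : ℕ) : x ^ a * y ^ b = x ^ (a - b) * y ^ (b - a) * (x * y) ^ min a b := by
  rcases le_total a b with h | h <;> obtain ⟨k, rfl⟩ := Nat.exists_eq_add_of_le h <;>
    simp only [pow_add, mul_pow, Nat.add_sub_cancel_left, Nat.sub_eq_zero_of_le h, pow_zero,
      min_eq_left h, min_eq_right h] <;> ac_rfl

namespace MvPolynomial

section LinearForm

variable {R : Type*} [CommRing R] {ι : Type*} [Fintype ι]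

variable (R ι) in
noncomputable def linearForm : (ι → R) →ₗ[R] MvPolynomial ι R := Fintype.linearCombination R X

theorem linearForm_apply (v : ι → R) : linearForm R ι v = ∑ i, v i • X i :=
  Fintype.linearCombination_apply ..

theorem linearForm_single [DecidableEq ι] (i : ι) : linearForm R ι (Pi.single i 1) = X i := by
  simp [linearForm_apply, Pi.single_apply]

theorem eval_linearForm (t v : ι → R) : eval t (linearForm R ι v) = v ⬝ᵥ t := by
  simp [linearForm_apply, dotProduct, smul_eq_C_mul]

theorem X_notMem_span_range_linearForm {κ : Type*} (v : κ → ι → R) {t : ι → R}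
    (ht : ∀ j, v j ⬝ᵥ t = 0) {i : ι} (hi : t i ≠ 0) :
    X i ∉ Ideal.span (range fun j => linearForm R ι (v j)) := by
  have hle : Ideal.span (range fun j => linearForm R ι (v j)) ≤ RingHom.ker (eval t) :=
    Ideal.span_le.mpr <| range_subset_iff.mpr fun j => by simp [eval_linearForm, ht]
  exact fun hX => hi (by simpa using hle hX)

theorem linearForm_mem_span_range_linearForm {κ : Type*} (v : κ → ι → R) {x : ι → R}
    (hx : x ∈ Submodule.span R (range v)) :
    linearForm R ι x ∈ Ideal.span (range fun j => linearForm R ι (v j)) := by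
  induction hx using Submodule.span_induction with
  | mem x hx =>
    obtain ⟨j, rfl⟩ := hx
    exact Ideal.subset_span ⟨j, rfl⟩
  | zero => simp
  | add x y _ _ hx hy => simpa using Ideal.add_mem _ hx hy
  | smul a x _ hx => simpa [smul_eq_C_mul] using Ideal.mul_mem_left _ (C a) hx

theorem isPrime_span_range_linearForm {K : Type*} [Field K] [DecidableEq ι] {κ : Type*}
    (v : κ → ι → K) : (Ideal.span (range fun j => linearForm K ι (v j))).IsPrime := by
  set I := Ideal.span (range fun j => linearForm K ι (v j))
  set L := Submodule.span K (range v)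
  let c := Module.Basis.ofVectorSpace K ((ι → K) ⧸ L)
  obtain ⟨s, hs⟩ := L.mkQ.exists_rightInverse_of_surjective L.range_mkQ
  -- `ρ x` is the class of `x` modulo `L`, as a linear form in coordinates on `(ι → K) ⧸ L`
  let ρ : (ι → K) →ₗ[K] MvPolynomial (Module.Basis.ofVectorSpaceIndex K ((ι → K) ⧸ L)) K :=
    Finsupp.linearCombination K X ∘ₗ c.repr.toLinearMap ∘ₗ L.mkQ
  let χ : MvPolynomial ι K →ₐ[K] _ := aeval fun i => ρ (Pi.single i 1)
  let σ : _ →ₐ[K] MvPolynomial ι K := aeval fun k => linearForm K ι (s (c k))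
  have hχ : χ.toLinearMap ∘ₗ linearForm K ι = ρ :=
    (Pi.basisFun K ι).ext fun i => by simp [χ, linearForm_single]
  have hσ : ∀ x, σ (ρ x) = linearForm K ι (s (L.mkQ x)) := by
    have : σ.toLinearMap ∘ₗ Finsupp.linearCombination K X ∘ₗ c.repr.toLinearMap =
        linearForm K ι ∘ₗ s :=
      c.ext fun k => by simp [σ]
    exact fun x => LinearMap.congr_fun this (L.mkQ x)
  have hsection : (Ideal.Quotient.mkₐ K I).comp (σ.comp χ) = Ideal.Quotient.mkₐ K I := by
    refine algHom_ext fun i => ?_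
    have hdiff : s (L.mkQ (Pi.single i 1)) - Pi.single i 1 ∈ L := by
      rw [← Submodule.Quotient.mk_eq_zero, ← L.mkQ_apply, map_sub, ← LinearMap.comp_apply L.mkQ s,
        hs, LinearMap.id_apply, sub_self]
    have := linearForm_mem_span_range_linearForm v hdiff
    rw [map_sub, linearForm_single] at this
    simpa [Ideal.Quotient.eq, χ, hσ] using this
  have hker : RingHom.ker χ = I := by
    refine le_antisymm (fun f hf => ?_) (Ideal.span_le.mpr <| range_subset_iff.mpr fun j => ?_)
    · rw [← Ideal.Quotient.eq_zero_iff_mem, ← Ideal.Quotient.mkₐ_eq_mk K, ← hsection]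
      simp [(RingHom.mem_ker).mp hf]
    · rw [SetLike.mem_coe, RingHom.mem_ker, ← AlgHom.toLinearMap_apply, ← LinearMap.comp_apply, hχ]
      simp [ρ, (Submodule.Quotient.mk_eq_zero L).mpr (Submodule.subset_span (mem_range_self j))]
  exact hker ▸ RingHom.ker_isPrime χ

end LinearForm

section Laurent

variable {R : Type*} [CommRing R] {ι : Type*} [Fintype ι]

variable (R ι) in
noncomputable def pairProd : MvPolynomial ι R →ₐ[R] MvPolynomial (ι ⊕ ι) R :=
  aeval fun i => X (.inl i) * X (.inr i)

theorem pairProd_linearForm (v : ι → R) :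
    pairProd R ι (linearForm R ι v) = ∑ i, C (v i) * X (.inl i) * X (.inr i) := by
  simp [linearForm_apply, pairProd, smul_eq_C_mul, mul_assoc]

variable (R) in
/-- The monomials of degree `d` for the grading `deg xᵢ = eᵢ`, `deg yᵢ = -eᵢ` are the multiples
of `x^{d⁺} y^{d⁻}` by monomials in the `xᵢ yᵢ`. -/
noncomputable def cornerMonomial (d : ι → ℤ) : MvPolynomial (ι ⊕ ι) R :=
  ∏ i, X (.inl i) ^ (d i).toNat * X (.inr i) ^ (-d i).toNat

theorem exists_monomial_eq_cornerMonomial_mul_pairProd (m : ι ⊕ ι →₀ ℕ) (c : R) :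
    ∃ d p, monomial m c = cornerMonomial R d * pairProd R ι p := by
  refine ⟨fun i => m (.inl i) - m (.inr i),
    monomial (Finsupp.equivFunOnFinite.symm fun i => min (m (.inl i)) (m (.inr i))) c, ?_⟩
  rw [monomial_eq, pairProd, aeval_monomial, Finsupp.prod_fintype _ _ fun _ => pow_zero _,
    Finsupp.prod_fintype _ _ fun _ => pow_zero _, Fintype.prod_sum_type, cornerMonomial,
    algebraMap_eq, ← Finset.prod_mul_distrib, mul_left_comm _ (C c), ← Finset.prod_mul_distrib]
  refine congrArg _ (Finset.prod_congr rfl fun i _ => ?_)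
  rw [show ((m (.inl i) : ℤ) - m (.inr i)).toNat = m (.inl i) - m (.inr i) by omega,
    show (-((m (.inl i) : ℤ) - m (.inr i))).toNat = m (.inr i) - m (.inl i) by omega]
  exact pow_mul_pow_eq_pow_sub_mul_pow_sub_mul_pow_min _ _ _ _

theorem exists_eq_sum_cornerMonomial_mul_pairProd (f : MvPolynomial (ι ⊕ ι) R) :
    ∃ F : (ι → ℤ) →₀ MvPolynomial ι R,
      f = F.sum fun d p => cornerMonomial R d * pairProd R ι p := by
  classical
  induction f using MvPolynomial.induction_on' with
  | monomial m c =>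
    obtain ⟨d, p, h⟩ := exists_monomial_eq_cornerMonomial_mul_pairProd m c
    exact ⟨.single d p, by rw [h, Finsupp.sum_single_index (by simp)]⟩
  | add f g hf hg =>
    obtain ⟨F, rfl⟩ := hf
    obtain ⟨G, rfl⟩ := hg
    exact ⟨F + G, (Finsupp.sum_add_index' (by simp) fun _ _ _ => by simp [mul_add]).symm⟩

variable [DecidableEq ι] {B : Type*} [CommRing B] [Algebra R B]

noncomputable def laurentMap (u : ι → B) :
    MvPolynomial (ι ⊕ ι) R →ₐ[R] AddMonoidAlgebra B (ι → ℤ) :=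
  aeval (Sum.elim (fun i => .single (Pi.single i 1) (u i)) fun i => .single (-Pi.single i 1) 1)

omit [Fintype ι] in
theorem laurentMap_pairProd (u : ι → B) (p : MvPolynomial ι R) :
    laurentMap u (pairProd R ι p) = .single 0 (aeval u p) := by
  have : (laurentMap u).comp (pairProd R ι) =
      AddMonoidAlgebra.singleZeroAlgHom.comp (aeval u) :=
    algHom_ext fun i => by simp [laurentMap, pairProd, AddMonoidAlgebra.single_mul_single]
  exact AlgHom.congr_fun this p

theorem laurentMap_cornerMonomial (u : ι → B) (d : ι → ℤ) :
    laurentMap u (cornerMonomial R d) = .single d (∏ i, u i ^ (d i).toNat) := by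
  simp only [cornerMonomial, laurentMap, map_prod, map_mul, map_pow, aeval_X, Sum.elim_inl,
    Sum.elim_inr, AddMonoidAlgebra.single_pow, AddMonoidAlgebra.single_mul_single, one_pow,
    mul_one, AddMonoidAlgebra.prod_single]
  congr 1
  ext j
  simp [Finset.sum_apply, Pi.single_apply, -Int.ofNat_toNat, ← sub_eq_add_neg,
    Int.toNat_sub_toNat_neg]

theorem ker_laurentMap (u : ι → B) (hu : ∀ i, u i ∈ nonZeroDivisors B) :
    RingHom.ker (laurentMap (R := R) u) = (RingHom.ker (aeval (R := R) u)).map (pairProd R ι) := by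
  refine le_antisymm (fun f hf => ?_) (Ideal.map_le_iff_le_comap.mpr fun p hp => ?_)
  · obtain ⟨F, rfl⟩ := exists_eq_sum_cornerMonomial_mul_pairProd f
    have hF : ∀ d ∈ F.support, aeval u (F d) = 0 := by
      intro d hdF
      have hd : (∏ i, u i ^ (d i).toNat) * aeval u (F d) = 0 := by
        simpa [Finsupp.sum, laurentMap_cornerMonomial, laurentMap_pairProd,
          AddMonoidAlgebra.single_mul_single, AddMonoidAlgebra.coeff_sum, Finsupp.single_apply,
          Finsupp.mem_support_iff.mp hdF] using
          congr(AddMonoidAlgebra.coeff $((RingHom.mem_ker).mp hf) d)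
      exact (mul_left_mem_nonZeroDivisors_eq_zero_iff
        (prod_mem fun i _ => pow_mem (hu i) _)).mp hd
    exact Ideal.sum_mem _ fun d hd => Ideal.mul_mem_left _ _ (Ideal.mem_map_of_mem _ (hF d hd))
  · simp [laurentMap_pairProd, (RingHom.mem_ker).mp hp]

end Laurent

end MvPolynomial

open MvPolynomial

theorem torus_moment_ideal_isPrime_general
    (n N : ℕ)
    (α : Fin N → (Fin n → ℤ))
    (hstable : (0 : EuclideanSpace ℝ (Fin n)) ∈
      intrinsicInterior ℝ (convexHull ℝ
        (Set.range fun i => (WithLp.toLp 2 (fun j => (α i j : ℝ)) : EuclideanSpace ℝ (Fin n))))) :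
    (Ideal.span (Set.range fun j : Fin n =>
        (∑ i : Fin N, C (α i j : ℂ) * X (Sum.inl i) * X (Sum.inr i) :
          MvPolynomial (Fin N ⊕ Fin N) ℂ))).IsPrime := by
  obtain ⟨t, ht_pos, ht_sum⟩ := exists_pos_sum_smul_eq_zero_of_zero_mem_intrinsicInterior _ hstable
  set r : Fin n → Fin N → ℂ := fun j i => α i j
  set I := Ideal.span (range fun j => linearForm ℂ (Fin N) (r j))
  have : I.IsPrime := isPrime_span_range_linearForm r
  have hrt : ∀ j, r j ⬝ᵥ (fun i => (t i : ℂ)) = 0 := fun j => by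
    have hreal : ∑ i, (α i j : ℝ) * t i = 0 := by simpa [mul_comm] using congr(($ht_sum) j)
    simp only [dotProduct, r]
    exact_mod_cast hreal
  have hu : ∀ i, Ideal.Quotient.mk I (X i) ∈ nonZeroDivisors (MvPolynomial (Fin N) ℂ ⧸ I) :=
    fun i => mem_nonZeroDivisors_of_ne_zero <| mt Ideal.Quotient.eq_zero_iff_mem.mp <|
      X_notMem_span_range_linearForm r hrt (by exact_mod_cast (ht_pos i).ne')
  have hμ : Ideal.span (range fun j => ∑ i : Fin N, C (α i j : ℂ) * X (Sum.inl i) * X (Sum.inr i))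
      = I.map (pairProd ℂ (Fin N)) := by
    rw [Ideal.map_span, ← range_comp]
    simp only [Function.comp_def, pairProd_linearForm, r]
  have hI : RingHom.ker (aeval fun i => Ideal.Quotient.mk I (X i)) = I := by
    rw [show aeval _ = Ideal.Quotient.mkₐ ℂ I from algHom_ext fun i => by simp]
    exact Ideal.Quotient.mkₐ_ker ℂ I
  rw [hμ, ← hI, ← ker_laurentMap _ hu]
  exact RingHom.ker_isPrime _

/-- Theorem 3.2 combined with Theorem 2.2(3): for a faithful
stable torus module (weights `α` generate `ℤⁿ` and `0` lies in the relative
interior of the convex hull of the weights), the ideal generated by the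
components `μ_j = Σ_i α_i(j)·X_i·Y_i` of the complexified moment map in
`ℂ[X₁,…,X_N,Y₁,…,Y_N]` is prime. -/
theorem torus_moment_ideal_isPrime
    (n N : ℕ) (hn : 1 ≤ n) (hN : 1 ≤ N)
    (α : Fin N → (Fin n → ℤ))
    (hfaithful : AddSubgroup.closure (Set.range α) = (⊤ : AddSubgroup (Fin n → ℤ)))
    (hstable : (0 : EuclideanSpace ℝ (Fin n)) ∈
      intrinsicInterior ℝ (convexHull ℝ
        (Set.range fun i => (WithLp.toLp 2 (fun j => (α i j : ℝ)) : EuclideanSpace ℝ (Fin n))))) :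
    (Ideal.span (Set.range fun j : Fin n =>
        (∑ i : Fin N, C (α i j : ℂ) * X (Sum.inl i) * X (Sum.inr i) :
          MvPolynomial (Fin N ⊕ Fin N) ℂ))).IsPrime :=
  torus_moment_ideal_isPrime_general n N α hstable
end

section
/- In the polynomial ring ℂ[x₁, x₂, x₃, x₄, y₁, y₂, y₃, y₄], the three quadratic polynomials μ_e = y₁x₂ + y₃x₄, μ_f = y₂x₁ + y₄x₃ and μ_h = y₁x₁ − y₂x₂ + y₃x₃ − y₄x₄ form a regular sequence. -/
/-! The three polynomials lie in the maximal ideal at the origin, so it suffices that each is a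
nonzerodivisor modulo the previous ones. Modulo `μe` the variable `x₂` is a nonzerodivisor, and
after inverting it `μe = 0` can be solved for `y₁`; likewise, after inverting `x₁x₂`, `(μe, μf)`
can be solved for `y₁, y₂`. Hence a polynomial is a nonzerodivisor modulo the ideal as soon as it
survives this substitution into the fraction field: `μf` does, and `x₁x₂ μh` becomes
`(x₂x₃ - x₁x₄)(x₁y₃ + x₂y₄) ≠ 0`. That `x₁` and `x₂` are nonzerodivisors modulo `(μe, μf)`
follows by exchanging them with `μf`, resp. `μe`, and setting the variable to zero. -/

open MvPolynomial

section QuotientRegular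

variable {R : Type*} [CommRing R]

theorem isSMulRegular_quotient_iff {I : Ideal R} {a : R} :
    IsSMulRegular (R ⧸ I) a ↔ ∀ g, a * g ∈ I → g ∈ I :=
  isSMulRegular_quotient_iff_mem_of_smul_mem I a

theorem Prime.isSMulRegular_quotient_span [IsDomain R] {p q : R} (hp : Prime p)
    (hpq : ¬p ∣ q) : IsSMulRegular (R ⧸ Ideal.span {q}) p := by
  refine isSMulRegular_quotient_iff.2 fun g hg ↦ ?_
  obtain ⟨h, hh⟩ := Ideal.mem_span_singleton'.1 hg
  obtain ⟨h', rfl⟩ := (hp.dvd_or_dvd ⟨g, by rw [← hh, mul_comm]⟩).resolve_right hpq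
  refine Ideal.mem_span_singleton'.2 ⟨h', mul_left_cancel₀ hp.ne_zero ?_⟩
  linear_combination hh

theorem IsSMulRegular.quotient_sup_span_swap {I : Ideal R} {a b : R}
    (ha : IsSMulRegular (R ⧸ I) a) (hb : IsSMulRegular (R ⧸ (I ⊔ Ideal.span {a})) b) :
    IsSMulRegular (R ⧸ (I ⊔ Ideal.span {b})) a := by
  simp only [isSMulRegular_quotient_iff, Submodule.mem_sup, Ideal.mem_span_singleton'] at *
  rintro m ⟨i, hi, _, ⟨c, rfl⟩, hm⟩
  obtain ⟨i', hi', _, ⟨m', rfl⟩, hc⟩ :=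
    hb c ⟨-i, I.neg_mem hi, a * m, ⟨m, mul_comm _ _⟩, by linear_combination -hm⟩
  have hI : a * (m - m' * b) ∈ I := by
    convert I.add_mem hi (I.mul_mem_left b hi') using 1
    linear_combination -hm - b * hc
  exact ⟨_, ha _ hI, m' * b, ⟨m', rfl⟩, by ring⟩

theorem isSMulRegular_quotient_of_map_ne_zero {K : Type*} [CommRing K] [IsDomain K]
    (φ : R →+* K) {I : Ideal R} {u a : R} (hu : IsSMulRegular (R ⧸ I) u)
    (hI : I ≤ RingHom.ker φ) (hsat : ∀ g, φ g = 0 → ∃ N, u ^ N * g ∈ I) (ha : φ a ≠ 0) :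
    IsSMulRegular (R ⧸ I) a := by
  refine isSMulRegular_quotient_iff.2 fun g hg ↦ ?_
  have hg0 : φ g = 0 := by
    simpa [map_mul, ha] using RingHom.mem_ker.1 (hI hg)
  obtain ⟨N, hN⟩ := hsat g hg0
  exact isSMulRegular_quotient_iff.1 (hu.pow N) g hN

theorem RingTheory.Sequence.isRegular_triple {a b c : R} (ha : IsSMulRegular R a)
    (hb : IsSMulRegular (R ⧸ Ideal.span {a}) b)
    (hc : IsSMulRegular (R ⧸ (Ideal.span {a} ⊔ Ideal.span {b})) c)
    (hne : Ideal.span {a} ⊔ Ideal.span {b} ⊔ Ideal.span {c} ≠ ⊤) :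
    IsRegular R [a, b, c] := by
  rw [isSMulRegular_quotient_iff] at hb hc
  refine (isRegular_iff _ _).2 ⟨(isWeaklyRegular_iff _ _).2 fun i hi ↦ ?_, ?_⟩
  · simp only [List.length_cons, List.length_nil] at hi
    rw [isSMulRegular_quotient_iff_mem_of_smul_mem]
    interval_cases i <;> simp only [smul_eq_mul, Ideal.mul_top, List.take, Ideal.ofList_cons,
      Ideal.ofList_nil, sup_bot_eq, Ideal.mem_bot]
    · exact fun x hx ↦ ha.right_eq_zero_of_smul hx
    · exact hb
    · exact hc
  · simpa [Ideal.mul_top, Ideal.ofList_singleton, sup_assoc, eq_comm] using hne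

end QuotientRegular

namespace MvPolynomial

variable {σ k : Type*} [CommRing k]

noncomputable def killX [DecidableEq σ] (i : σ) : MvPolynomial σ k →ₐ[k] MvPolynomial σ k :=
  aeval (Function.update X i 0)

theorem killX_X_self [DecidableEq σ] (i : σ) : killX i (X i : MvPolynomial σ k) = 0 := by
  simp [killX]

theorem X_dvd_sub_killX [DecidableEq σ] (i : σ) (p : MvPolynomial σ k) : X i ∣ p - killX i p := by
  rw [← Ideal.mem_span_singleton, ← Ideal.Quotient.eq]
  suffices (Ideal.Quotient.mkₐ k (Ideal.span {X i})).comp (killX i) =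
      Ideal.Quotient.mkₐ k _ from (congrArg (· p) this).symm
  refine algHom_ext fun j ↦ ?_
  obtain rfl | hj := eq_or_ne j i
  · simp [killX]
  · simp [killX, hj]

theorem isSMulRegular_quotient_sup_span_X [DecidableEq σ] {I : Ideal (MvPolynomial σ k)} {i : σ}
    {a : MvPolynomial σ k} (hI : I.map (killX i) ≤ I)
    (ha : IsSMulRegular (MvPolynomial σ k ⧸ I) (killX i a)) :
    IsSMulRegular (MvPolynomial σ k ⧸ (I ⊔ Ideal.span {X i})) a := by
  refine isSMulRegular_quotient_iff.2 fun g hg ↦ ?_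
  obtain ⟨f, hf, y, hy, hfg⟩ := Submodule.mem_sup.1 hg
  obtain ⟨c, rfl⟩ := Ideal.mem_span_singleton'.1 hy
  have hkill : killX i a * killX i g ∈ I := by
    rw [← map_mul, ← hfg, map_add, map_mul, killX_X_self, mul_zero, add_zero]
    exact hI (Ideal.mem_map_of_mem _ hf)
  rw [show g = killX i g + (g - killX i g) by ring]
  exact add_mem (Ideal.mem_sup_left (isSMulRegular_quotient_iff.1 ha _ hkill))
    (Ideal.mem_sup_right (Ideal.mem_span_singleton.2 (X_dvd_sub_killX i g)))

theorem exists_pow_mul_sub_mem_supported {I : Ideal (MvPolynomial σ k)} {S : Set σ}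
    {u : MvPolynomial σ k} (hu : u ∈ supported k S)
    (hX : ∀ i ∉ S, ∃ w ∈ supported k S, u * X i - w ∈ I) (g : MvPolynomial σ k) :
    ∃ N, ∃ P ∈ supported k S, u ^ N * g - P ∈ I := by
  induction g using MvPolynomial.induction_on with
  | C c => exact ⟨0, C c, Subalgebra.algebraMap_mem _ c, by simp⟩
  | add p q hp hq =>
    obtain ⟨M, P, hP, hpP⟩ := hp
    obtain ⟨N, Q, hQ, hqQ⟩ := hq
    refine ⟨M + N, u ^ N * P + u ^ M * Q,
      add_mem (mul_mem (pow_mem hu N) hP) (mul_mem (pow_mem hu M) hQ), ?_⟩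
    convert add_mem (I.mul_mem_left (u ^ N) hpP) (I.mul_mem_left (u ^ M) hqQ) using 1
    ring
  | mul_X p j hp =>
    obtain ⟨N, P, hP, hpP⟩ := hp
    by_cases hj : j ∈ S
    · refine ⟨N, P * X j, mul_mem hP (Algebra.subset_adjoin ⟨j, hj, rfl⟩), ?_⟩
      rw [show u ^ N * (p * X j) - P * X j = (u ^ N * p - P) * X j by ring]
      exact I.mul_mem_right (X j) hpP
    · obtain ⟨w, hw, hwI⟩ := hX j hj
      refine ⟨N + 1, P * w, mul_mem hP hw, ?_⟩
      convert add_mem (I.mul_mem_left (u * X j) hpP) (I.mul_mem_left P hwI) using 1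
      ring

theorem aeval_eq_algebraMap_of_mem_supported {S : Set σ} {v : σ → FractionRing (MvPolynomial σ k)}
    (hv : ∀ i ∈ S, v i = algebraMap _ _ (X i : MvPolynomial σ k))
    {P : MvPolynomial σ k} (hP : P ∈ supported k S) : aeval v P = algebraMap _ _ P := by
  refine hom_congr_vars (f₁ := (aeval v).toRingHom) ?_ (fun i hi _ ↦ ?_) rfl
  · ext c
    simp [IsScalarTower.algebraMap_apply k (MvPolynomial σ k) (FractionRing (MvPolynomial σ k))]
  · simpa using hv i (mem_supported.1 hP hi)

theorem exists_pow_mul_mem_of_aeval_eq_zero {I : Ideal (MvPolynomial σ k)}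
    {S : Set σ} {u : MvPolynomial σ k} (hu : u ∈ supported k S)
    (hX : ∀ i ∉ S, ∃ w ∈ supported k S, u * X i - w ∈ I)
    {v : σ → FractionRing (MvPolynomial σ k)}
    (hv : ∀ i ∈ S, v i = algebraMap _ _ (X i : MvPolynomial σ k))
    (hI : I ≤ RingHom.ker (aeval v)) {g : MvPolynomial σ k} (hg : aeval v g = 0) :
    ∃ N, u ^ N * g ∈ I := by
  obtain ⟨N, P, hP, hgP⟩ := exists_pow_mul_sub_mem_supported hu hX g
  have hP0 : algebraMap _ (FractionRing (MvPolynomial σ k)) P = 0 := by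
    simpa [← aeval_eq_algebraMap_of_mem_supported hv hP, hg] using hI hgP
  rw [IsFractionRing.to_map_eq_zero_iff] at hP0
  exact ⟨N, by simpa [hP0] using hgP⟩

theorem not_X_dvd_of_eval_ne_zero {i : σ} {p : MvPolynomial σ k} (x : σ → k) (hx : x i = 0)
    (hp : eval x p ≠ 0) : ¬X i ∣ p := by
  rintro ⟨q, rfl⟩
  simp [hx] at hp

end MvPolynomial

namespace SL2TwoCopies

local notation "𝓡" => MvPolynomial (Fin 8) ℂ
local notation "𝓚" => FractionRing 𝓡

noncomputable def μe : 𝓡 := X 4 * X 1 + X 6 * X 3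
noncomputable def μf : 𝓡 := X 5 * X 0 + X 7 * X 2
noncomputable def μh : 𝓡 := X 4 * X 0 - X 5 * X 1 + X 6 * X 2 - X 7 * X 3

theorem not_X_dvd_μe (i : Fin 8) : ¬X i ∣ μe :=
  not_X_dvd_of_eval_ne_zero (Function.update 1 i 0) (by simp) (by fin_cases i <;> simp [μe])

theorem not_X_dvd_μf (i : Fin 8) : ¬X i ∣ μf :=
  not_X_dvd_of_eval_ne_zero (Function.update 1 i 0) (by simp) (by fin_cases i <;> simp [μf])

theorem isSMulRegular_X_quotient_μe (i : Fin 8) : IsSMulRegular (𝓡 ⧸ Ideal.span {μe}) (X i : 𝓡) :=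
  X_prime.isSMulRegular_quotient_span (not_X_dvd_μe i)

theorem isSMulRegular_X_quotient_μf (i : Fin 8) : IsSMulRegular (𝓡 ⧸ Ideal.span {μf}) (X i : 𝓡) :=
  X_prime.isSMulRegular_quotient_span (not_X_dvd_μf i)

local notation "ι" => algebraMap 𝓡 𝓚

noncomputable def solveμe : Fin 8 → 𝓚 :=
  Function.update (fun i ↦ ι (X i)) 4 (-(ι (X 6) * ι (X 3)) / ι (X 1))

noncomputable def solveμeμf : Fin 8 → 𝓚 :=
  Function.update solveμe 5 (-(ι (X 7) * ι (X 2)) / ι (X 0))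

theorem algebraMap_X_ne_zero (i : Fin 8) : ι (X i) ≠ 0 :=
  IsFractionRing.to_map_ne_zero_of_mem_nonZeroDivisors <|
    mem_nonZeroDivisors_of_ne_zero (X_ne_zero i)

theorem aeval_solveμe_μe : aeval solveμe μe = 0 := by
  have := algebraMap_X_ne_zero 1
  simp [solveμe, μe]

theorem aeval_solveμe_μf : aeval solveμe μf = ι μf := by
  simp [solveμe, μf]

theorem aeval_solveμeμf_μe : aeval solveμeμf μe = 0 := by
  have := algebraMap_X_ne_zero 1
  simp [solveμeμf, solveμe, μe]

theorem aeval_solveμeμf_μf : aeval solveμeμf μf = 0 := by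
  have := algebraMap_X_ne_zero 0
  simp [solveμeμf, solveμe, μf]

theorem aeval_solveμeμf_μh :
    aeval solveμeμf μh * ι (X 0 * X 1) = ι ((X 1 * X 2 - X 0 * X 3) * (X 0 * X 6 + X 1 * X 7)) := by
  have := algebraMap_X_ne_zero 0
  have := algebraMap_X_ne_zero 1
  simp [solveμeμf, solveμe, μh]
  field_simp
  ring

theorem μe_ne_zero : μe ≠ 0 := fun h ↦ not_X_dvd_μe 0 (h ▸ dvd_zero _)

theorem μf_ne_zero : μf ≠ 0 := fun h ↦ not_X_dvd_μf 0 (h ▸ dvd_zero _)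

theorem span_μe_le_ker : Ideal.span {μe} ≤ RingHom.ker (aeval solveμe) := by
  simpa [Ideal.span_le] using aeval_solveμe_μe

theorem span_μe_μf_le_ker : Ideal.span {μe} ⊔ Ideal.span {μf} ≤ RingHom.ker (aeval solveμeμf) := by
  simpa [Ideal.span_le] using ⟨aeval_solveμeμf_μe, aeval_solveμeμf_μf⟩

theorem exists_pow_mul_mem_of_aeval_solveμe_eq_zero {g : 𝓡} (hg : aeval solveμe g = 0) :
    ∃ N, X 1 ^ N * g ∈ Ideal.span {μe} := by
  refine exists_pow_mul_mem_of_aeval_eq_zero (S := {4}ᶜ) (X_mem_supported.2 (by simp))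
    (fun i hi ↦ ?_) (fun i hi ↦ Function.update_of_ne (Set.mem_compl_singleton_iff.1 hi) _ _)
    span_μe_le_ker hg
  obtain rfl : i = 4 := by simpa using hi
  exact ⟨-(X 6 * X 3),
    neg_mem (mul_mem (X_mem_supported.2 (by simp)) (X_mem_supported.2 (by simp))),
    Ideal.mem_span_singleton.2 ⟨1, by rw [μe]; ring⟩⟩

theorem exists_pow_mul_mem_of_aeval_solveμeμf_eq_zero {g : 𝓡} (hg : aeval solveμeμf g = 0) :
    ∃ N, (X 0 * X 1) ^ N * g ∈ Ideal.span {μe} ⊔ Ideal.span {μf} := by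
  have hX (j : Fin 8) (hj : j ≠ 4 ∧ j ≠ 5) : (X j : 𝓡) ∈ supported ℂ {4, 5}ᶜ :=
    X_mem_supported.2 (by simpa using hj)
  refine exists_pow_mul_mem_of_aeval_eq_zero (S := {4, 5}ᶜ)
    (mul_mem (hX 0 (by decide)) (hX 1 (by decide))) (fun i hi ↦ ?_) (fun i hi ↦ ?_)
    span_μe_μf_le_ker hg
  · obtain rfl | rfl : i = 4 ∨ i = 5 := not_not.1 hi
    · refine ⟨-(X 0 * (X 6 * X 3)),
        neg_mem (mul_mem (hX 0 (by decide)) (mul_mem (hX 6 (by decide)) (hX 3 (by decide)))),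
        Ideal.mem_sup_left (Ideal.mem_span_singleton.2 ⟨X 0, by rw [μe]; ring⟩)⟩
    · refine ⟨-(X 1 * (X 7 * X 2)),
        neg_mem (mul_mem (hX 1 (by decide)) (mul_mem (hX 7 (by decide)) (hX 2 (by decide)))),
        Ideal.mem_sup_right (Ideal.mem_span_singleton.2 ⟨X 1, by rw [μf]; ring⟩)⟩
  · obtain ⟨h4, h5⟩ : i ≠ 4 ∧ i ≠ 5 := by simpa using hi
    simp [solveμeμf, solveμe, h4, h5]

theorem aeval_solveμeμf_μh_ne_zero : aeval solveμeμf μh ≠ 0 := by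
  have hne : ((X 1 * X 2 - X 0 * X 3) * (X 0 * X 6 + X 1 * X 7) : 𝓡) ≠ 0 := fun h ↦ by
    simpa using congrArg (eval ![0, 1, 1, 0, 0, 0, 0, 1]) h
  intro h
  refine hne (IsFractionRing.injective 𝓡 𝓚 ?_)
  rw [← aeval_solveμeμf_μh, map_zero, h, zero_mul]

theorem isSMulRegular_μe : IsSMulRegular 𝓡 μe :=
  (IsRegular.of_ne_zero μe_ne_zero).left.isSMulRegular

theorem isSMulRegular_μf_quotient_μe : IsSMulRegular (𝓡 ⧸ Ideal.span {μe}) μf :=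
  isSMulRegular_quotient_of_map_ne_zero (aeval solveμe).toRingHom (isSMulRegular_X_quotient_μe 1)
    span_μe_le_ker (fun _ ↦ exists_pow_mul_mem_of_aeval_solveμe_eq_zero)
    (by simpa [aeval_solveμe_μf] using μf_ne_zero)

theorem isSMulRegular_X0_quotient_μe_μf :
    IsSMulRegular (𝓡 ⧸ (Ideal.span {μe} ⊔ Ideal.span {μf})) (X 0 : 𝓡) := by
  refine (isSMulRegular_X_quotient_μe 0).quotient_sup_span_swap
    (isSMulRegular_quotient_sup_span_X ?_ ?_)
  · rw [Ideal.map_span, Set.image_singleton, show killX 0 μe = μe by simp [killX, μe]]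
  · rw [show killX 0 μf = X 7 * X 2 by simp [killX, μf]]
    exact (isSMulRegular_X_quotient_μe 7).mul (isSMulRegular_X_quotient_μe 2)

theorem isSMulRegular_X1_quotient_μe_μf :
    IsSMulRegular (𝓡 ⧸ (Ideal.span {μe} ⊔ Ideal.span {μf})) (X 1 : 𝓡) := by
  rw [sup_comm]
  refine (isSMulRegular_X_quotient_μf 1).quotient_sup_span_swap
    (isSMulRegular_quotient_sup_span_X ?_ ?_)
  · rw [Ideal.map_span, Set.image_singleton, show killX 1 μf = μf by simp [killX, μf]]
  · rw [show killX 1 μe = X 6 * X 3 by simp [killX, μe]]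
    exact (isSMulRegular_X_quotient_μf 6).mul (isSMulRegular_X_quotient_μf 3)

theorem isSMulRegular_μh_quotient_μe_μf :
    IsSMulRegular (𝓡 ⧸ (Ideal.span {μe} ⊔ Ideal.span {μf})) μh :=
  isSMulRegular_quotient_of_map_ne_zero (aeval solveμeμf).toRingHom
    (isSMulRegular_X0_quotient_μe_μf.mul isSMulRegular_X1_quotient_μe_μf) span_μe_μf_le_ker
    (fun _ ↦ exists_pow_mul_mem_of_aeval_solveμeμf_eq_zero) aeval_solveμeμf_μh_ne_zero

theorem span_μ_ne_top : Ideal.span {μe} ⊔ Ideal.span {μf} ⊔ Ideal.span {μh} ≠ ⊤ :=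
  ne_top_of_le_ne_top (RingHom.ker_ne_top (constantCoeff : 𝓡 →+* ℂ))
    (by simp [Ideal.span_le, μe, μf, μh])

end SL2TwoCopies

/-- The components of the moment map of the `SL₂(ℂ)`-module `V = ℂ² ⊕ ℂ²`,
evaluated on the standard basis `e`, `f`, `h` of `𝔰𝔩₂`.  Variables `0,…,3`
are the coordinates `x₁,…,x₄` on `V` and variables `4,…,7` are the dual
coordinates `y₁,…,y₄`. -/
theorem sl2_two_copies_moment_components_isRegular :
    RingTheory.Sequence.IsRegular (MvPolynomial (Fin 8) ℂ)
      [ (X 4 * X 1 + X 6 * X 3 : MvPolynomial (Fin 8) ℂ),    -- μ_e = y₁x₂ + y₃x₄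
        (X 5 * X 0 + X 7 * X 2 : MvPolynomial (Fin 8) ℂ),    -- μ_f = y₂x₁ + y₄x₃
        (X 4 * X 0 - X 5 * X 1 + X 6 * X 2 - X 7 * X 3 : MvPolynomial (Fin 8) ℂ) ] := by
        -- μ_h = y₁x₁ − y₂x₂ + y₃x₃ − y₄x₄
  exact RingTheory.Sequence.isRegular_triple SL2TwoCopies.isSMulRegular_μe
    SL2TwoCopies.isSMulRegular_μf_quotient_μe SL2TwoCopies.isSMulRegular_μh_quotient_μe_μf
    SL2TwoCopies.span_μ_ne_top
end

section
/- In the polynomial ring ℂ[x₁, x₂, x₃, x₄, y₁, y₂, y₃, y₄], the ideal generated by the three quadratic polynomials μ_e = y₁x₂ + y₃x₄, μ_f = y₂x₁ + y₄x₃ and μ_h = y₁x₁ − y₂x₂ + y₃x₃ − y₄x₄ is not a prime ideal. -/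
open MvPolynomial

/-- The ideal generated by the components of the moment map of the
`SL₂(ℂ)`-module `V = ℂ² ⊕ ℂ²` (on the standard basis `e`, `f`, `h` of `𝔰𝔩₂`)
is not prime: the zero scheme `Y = μ⁻¹(0)` is not irreducible.  Variables
`0,…,3` are the coordinates `x₁,…,x₄` and variables `4,…,7` the dual
coordinates `y₁,…,y₄`. -/
theorem sl2_two_copies_moment_ideal_not_prime :
    ¬ (Ideal.span
        { (X 4 * X 1 + X 6 * X 3 : MvPolynomial (Fin 8) ℂ),   -- μ_e = y₁x₂ + y₃x₄
          (X 5 * X 0 + X 7 * X 2 : MvPolynomial (Fin 8) ℂ),   -- μ_f = y₂x₁ + y₄x₃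
          (X 4 * X 0 - X 5 * X 1 + X 6 * X 2 - X 7 * X 3 : MvPolynomial (Fin 8) ℂ)
          }).IsPrime := by                               -- μ_h = y₁x₁ − y₂x₂ + y₃x₃ − y₄x₄
  intro hP
  set g1 : MvPolynomial (Fin 8) ℂ := X 4 * X 1 + X 6 * X 3 with hg1
  set g2 : MvPolynomial (Fin 8) ℂ := X 5 * X 0 + X 7 * X 2 with hg2
  set g3 : MvPolynomial (Fin 8) ℂ := X 4 * X 0 - X 5 * X 1 + X 6 * X 2 - X 7 * X 3 with hg3
  set I : Ideal (MvPolynomial (Fin 8) ℂ) := Ideal.span {g1, g2, g3} with hI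
  -- p = tr(VF) = y₁x₁ + y₂x₂ + y₃x₃ + y₄x₄, q = (FV)₁₂ = y₁x₃ + y₂x₄
  set p : MvPolynomial (Fin 8) ℂ := X 4 * X 0 + X 5 * X 1 + X 6 * X 2 + X 7 * X 3 with hp
  set q : MvPolynomial (Fin 8) ℂ := X 4 * X 2 + X 5 * X 3 with hq
  have hg1I : g1 ∈ I := Ideal.subset_span (by simp)
  have hg2I : g2 ∈ I := Ideal.subset_span (by simp)
  have hg3I : g3 ∈ I := Ideal.subset_span (by simp)
  have hpq : p * q ∈ I := by
    have hid : p * q = (2 * X 2 * X 5) * g1 + (2 * X 3 * X 4) * g2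
        + (X 2 * X 4 - X 3 * X 5) * g3 := by
      rw [hp, hq, hg1, hg2, hg3]; ring
    rw [hid]
    exact Ideal.add_mem _ (Ideal.add_mem _ (Ideal.mul_mem_left _ _ hg1I)
      (Ideal.mul_mem_left _ _ hg2I)) (Ideal.mul_mem_left _ _ hg3I)
  -- evaluation points killing the generators
  have hker : ∀ a : Fin 8 → ℂ, eval a g1 = 0 → eval a g2 = 0 → eval a g3 = 0 →
      ∀ r ∈ I, eval a r = 0 := by
    intro a h1 h2 h3 r hr
    have : I ≤ RingHom.ker (eval a) := by
      rw [hI, Ideal.span_le]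
      intro s hs
      simp only [Set.mem_insert_iff, Set.mem_singleton_iff] at hs
      rcases hs with rfl | rfl | rfl <;> simpa [RingHom.mem_ker]
    exact this hr
  rcases hP.mem_or_mem hpq with h | h
  · -- point x=(1,0,0,1), y=(1,0,0,1): tr = 2 ≠ 0
    set a : Fin 8 → ℂ := ![1,0,0,1,1,0,0,1] with ha
    have e0 : a 0 = 1 := rfl
    have e1 : a 1 = 0 := rfl
    have e2 : a 2 = 0 := rfl
    have e3 : a 3 = 1 := rfl
    have e4 : a 4 = 1 := rfl
    have e5 : a 5 = 0 := rfl
    have e6 : a 6 = 0 := rfl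
    have e7 : a 7 = 1 := rfl
    have := hker a (by simp [hg1, e1, e3, e4, e6]) (by simp [hg2, e0, e2, e5, e7])
      (by simp [hg3, e0, e1, e2, e3, e4, e5, e6, e7]) p h
    rw [hp] at this
    simp [e0, e1, e2, e3, e4, e5, e6, e7] at this
  · -- point x=(0,0,1,0), y=(1,0,0,0): q = 1 ≠ 0
    set a : Fin 8 → ℂ := ![0,0,1,0,1,0,0,0] with ha
    have e0 : a 0 = 0 := rfl
    have e1 : a 1 = 0 := rfl
    have e2 : a 2 = 1 := rfl
    have e3 : a 3 = 0 := rfl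
    have e4 : a 4 = 1 := rfl
    have e5 : a 5 = 0 := rfl
    have e6 : a 6 = 0 := rfl
    have e7 : a 7 = 0 := rfl
    have := hker a (by simp [hg1, e1, e3, e4, e6]) (by simp [hg2, e0, e2, e5, e7])
      (by simp [hg3, e0, e1, e2, e3, e4, e5, e6, e7]) q h
    rw [hq] at this
    simp [e2, e3, e4, e5] at this
end

section
/- Let v₁, v₂ ∈ ℂ² be linearly dependent vectors. If ⟨A·v₁, v₁⟩ + ⟨A·v₂, v₂⟩ = 0 for every matrix A ∈ M₂(ℂ) with Aᴴ = −A and tr A = 0 (i.e. for every A in the Lie algebra 𝔰𝔲₂ of skew-hermitian traceless matrices), then v₁ = 0 and v₂ = 0. -/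
open Complex ComplexConjugate

/-- If `x·conj y = 0` and `|x|² = |y|²` then `x = y = 0`. -/
lemma su2_aux_pair_zero (x y : ℂ) (h : x * conj y = 0)
    (he : x * conj x = y * conj y) : x = 0 ∧ y = 0 := by
  rw [Complex.mul_conj, Complex.mul_conj] at he
  have hsq : Complex.normSq x = Complex.normSq y := by exact_mod_cast he
  rcases mul_eq_zero.mp h with hx | hy
  · refine ⟨hx, ?_⟩
    rw [hx] at hsq
    simp only [map_zero] at hsq
    exact Complex.normSq_eq_zero.mp hsq.symm
  · have hy0 : y = 0 := by rwa [starRingEnd_apply, star_eq_zero] at hy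
    refine ⟨?_, hy0⟩
    rw [hy0] at hsq
    simp only [map_zero] at hsq
    exact Complex.normSq_eq_zero.mp hsq

/-- The claim `𝒩(V) ∩ ℳ = {0}` of Example 6.1: if a linearly dependent pair
`(v₁, v₂)` of vectors in `ℂ²` lies in the zero fiber of the moment map of the
unitary `SU₂`-module `ℂ² ⊕ ℂ²` (i.e. `⟨Av₁,v₁⟩ + ⟨Av₂,v₂⟩ = 0` for every
traceless skew-hermitian `A`), then `v₁ = v₂ = 0`.  Here `⟨x,y⟩ = Σᵢ xᵢ·conj(yᵢ)`
is the standard hermitian inner product on `ℂ²`. -/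
theorem su2_nullcone_inter_kempfNess_eq_zero (v₁ v₂ : Fin 2 → ℂ)
    (hdep : ¬ LinearIndependent ℂ ![v₁, v₂])
    (hmom : ∀ A : Matrix (Fin 2) (Fin 2) ℂ, A.conjTranspose = -A → A.trace = 0 →
      (∑ i, A.mulVec v₁ i * (starRingEnd ℂ) (v₁ i)) +
      (∑ i, A.mulVec v₂ i * (starRingEnd ℂ) (v₂ i)) = 0) :
    v₁ = 0 ∧ v₂ = 0 := by
  have h1 := hmom !![Complex.I, 0; 0, -Complex.I]
    (by ext i j; fin_cases i <;> fin_cases j <;> simp [Matrix.conjTranspose_apply])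
    (by simp [Matrix.trace_fin_two])
  have h2 := hmom !![0, 1; -1, 0]
    (by ext i j; fin_cases i <;> fin_cases j <;> simp [Matrix.conjTranspose_apply])
    (by simp [Matrix.trace_fin_two])
  have h3 := hmom !![0, Complex.I; Complex.I, 0]
    (by ext i j; fin_cases i <;> fin_cases j <;> simp [Matrix.conjTranspose_apply])
    (by simp [Matrix.trace_fin_two])
  simp [Matrix.mulVec, dotProduct, Fin.sum_univ_two] at h1 h2 h3
  -- `hE1` : `|v₁0|² - |v₁1|² + |v₂0|² - |v₂1|² = 0`
  have hE1 : v₁ 0 * conj (v₁ 0) - v₁ 1 * conj (v₁ 1)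
      + v₂ 0 * conj (v₂ 0) - v₂ 1 * conj (v₂ 1) = 0 := by
    have hf : Complex.I * (v₁ 0 * conj (v₁ 0) - v₁ 1 * conj (v₁ 1)
        + v₂ 0 * conj (v₂ 0) - v₂ 1 * conj (v₂ 1)) = 0 := by linear_combination h1
    exact (mul_eq_zero.mp hf).resolve_left Complex.I_ne_zero
  -- `hZ` : `v₁1·conj v₁0 + v₂1·conj v₂0 = 0`
  have hZ : v₁ 1 * conj (v₁ 0) + v₂ 1 * conj (v₂ 0) = 0 := by
    have hf : Complex.I * (v₁ 1 * conj (v₁ 0) + v₁ 0 * conj (v₁ 1)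
        + v₂ 1 * conj (v₂ 0) + v₂ 0 * conj (v₂ 1)) = 0 := by linear_combination h3
    have h3' := (mul_eq_zero.mp hf).resolve_left Complex.I_ne_zero
    linear_combination h2 / 2 + h3' / 2
  rw [linearIndependent_fin2, not_and_or] at hdep
  push_neg at hdep
  rcases hdep with h | ⟨a, ha⟩
  · -- `v₂ = 0`
    have h : v₂ = 0 := h
    rw [h] at hZ hE1
    simp only [Pi.zero_apply, map_zero, mul_zero, zero_mul, add_zero, sub_zero] at hZ hE1
    have hz : v₁ 1 * conj (v₁ 0) = 0 := hZ
    have he : v₁ 1 * conj (v₁ 1) = v₁ 0 * conj (v₁ 0) := by linear_combination -hE1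
    obtain ⟨h1', h0'⟩ := su2_aux_pair_zero _ _ hz he
    refine ⟨funext fun i => ?_, h⟩
    fin_cases i <;> simpa
  · -- `v₁ = a • v₂`
    have e0 : v₁ 0 = a * v₂ 0 := (congrFun ha 0).symm
    have e1 : v₁ 1 = a * v₂ 1 := (congrFun ha 1).symm
    rw [e0, e1] at hZ hE1
    simp only [map_mul] at hZ hE1
    have hna : a * conj a + 1 ≠ 0 := by
      rw [Complex.mul_conj]
      exact_mod_cast (add_pos_of_nonneg_of_pos (Complex.normSq_nonneg a) one_pos).ne'
    have hz : v₂ 1 * conj (v₂ 0) = 0 := by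
      have hfac : (a * conj a + 1) * (v₂ 1 * conj (v₂ 0)) = 0 := by linear_combination hZ
      exact (mul_eq_zero.mp hfac).resolve_left hna
    have he : v₂ 1 * conj (v₂ 1) = v₂ 0 * conj (v₂ 0) := by
      have hfac : (a * conj a + 1) * (v₂ 1 * conj (v₂ 1) - v₂ 0 * conj (v₂ 0)) = 0 := by
        linear_combination -hE1
      exact sub_eq_zero.mp ((mul_eq_zero.mp hfac).resolve_left hna)
    obtain ⟨h1', h0'⟩ := su2_aux_pair_zero _ _ hz he
    have hv2 : v₂ = 0 := funext fun i => by fin_cases i <;> simpa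
    refine ⟨funext fun i => ?_, hv2⟩
    fin_cases i <;> simp [e0, e1, h0', h1']
end
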